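/- For every λ ∈ Λ_a^+(r − 2f), the total degree of the sequence 𝐢_λ equals Σ_{c=1}^{r−2f} a_c; that is, Σ_{j=1}^{a} Σ_{l ≥ 1} λ^{(j)}_l · deg(entry of block j, part l) = Σ_{c=1}^{r−2f} a_c. -/

import Mathlib

open Finset

/-- `lam` encodes an `a`-multipartition of `m`: for each block `j ∈ [1,a]`,
`lam j l` is the `l`-th part (`l ≥ 1`); each block is a partition (weakly
decreasing, vanishing beyond index `m`) and the total size is `m`. -/
def IsMultipartition (a m : ℕ) (lam : ℕ → ℕ → ℕ) : Prop :=
  (∀ j, 1 ≤ j → j ≤ a → ∀ l, 1 ≤ l → lam j (l + 1) ≤ lam j l) ∧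
  (∀ j, 1 ≤ j → j ≤ a → ∀ l, m < l → lam j l = 0) ∧
  (∑ j ∈ Finset.Icc 1 a, ∑ l ∈ Finset.Icc 1 m, lam j l = m)

/-- `|λ^{(t)}|`, the size of the `t`-th constituent partition. -/
def blockSum (m : ℕ) (lam : ℕ → ℕ → ℕ) (t : ℕ) : ℕ := ∑ l ∈ Finset.Icc 1 m, lam t l

/-- The dominance order `λ ⊵ μ` on `a`-multipartitions of `m`. -/
def Dominates (a m : ℕ) (lam mu : ℕ → ℕ → ℕ) : Prop :=
  ∀ s, 1 ≤ s → s ≤ a → ∀ h : ℕ,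
    (∑ t ∈ Finset.Icc 1 (s - 1), blockSum m mu t) + ∑ j ∈ Finset.Icc 1 h, mu s j ≤
    (∑ t ∈ Finset.Icc 1 (s - 1), blockSum m lam t) + ∑ j ∈ Finset.Icc 1 h, lam s j

lemma telescope_Ioc (e : ℕ → ℕ) (F : ℕ → ℕ) (N : ℕ)
    (hm : ∀ s, e (s + 1) ≤ e s) :
    ∑ s ∈ Finset.Icc 1 N, ∑ c ∈ Finset.Ioc (e s) (e (s - 1)), F c
      = ∑ c ∈ Finset.Ioc (e N) (e 0), F c := by
  have hanti : Antitone e := antitone_nat_of_succ_le hm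
  induction N with
  | zero => simp
  | succ N ih =>
    rw [Finset.sum_Icc_succ_top (by omega), ih]
    have h1 : N + 1 - 1 = N := rfl
    rw [h1, add_comm]
    exact Finset.sum_Ioc_consecutive F (hm N) (hanti (Nat.zero_le N))

/-- Lemma 4.15(6): the total degree of the sequence `𝐢_λ` equals
`Σ_{c=1}^{r-2f} a_c`.  Here `b t = Σ_{j=1}^{t} |λ^{(j)}|` are the partial block
sizes, `A c = a_c` is characterized by `A c = a - j` whenever
`b_a - b_{a-j} ≥ c > b_a - b_{a-j+1}`, `D` is the degree function
(`D m = t - 1` and `D (-m) = a - t` whenever `p_{t-1} < m ≤ p_t`), and the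
entry of `𝐢_λ` in block `j`, part `l`, is `p_{j-1} + l` for `1 ≤ j ≤ k` and
`-(p_{2k-j+δ} - l + 1)` for `k+1 ≤ j ≤ a`. -/
theorem stmt14 (k r n : ℕ) (hk : 1 ≤ k) (hr : 1 ≤ r)
    (p : ℕ → ℕ) (hp0 : p 0 = 0) (hpk : p k = n)
    (hmono : ∀ t, 1 ≤ t → t ≤ k → p (t - 1) < p t)
    (hgap : ∀ t, 1 ≤ t → t ≤ k → p (t - 1) + 2 * r ≤ p t)
    (ii : ℕ) (hii : ii = 1 ∨ ii = 2)
    (a δ : ℕ)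
    (ha : (ii = 1 → a = 2 * k ∧ δ = 1) ∧ (ii = 2 → a = 2 * k - 1 ∧ δ = 0))
    (f : ℕ) (hf : 2 * f ≤ r)
    (lam : ℕ → ℕ → ℕ) (hlam : IsMultipartition a (r - 2 * f) lam)
    (b : ℕ → ℕ)
    (hb : ∀ t, b t = ∑ j ∈ Finset.Icc 1 t, ∑ l ∈ Finset.Icc 1 (r - 2 * f), lam j l)
    (A : ℕ → ℕ)
    (hA : ∀ c, 1 ≤ c → c ≤ r - 2 * f → ∀ j, 1 ≤ j → j ≤ a →
      c ≤ b a - b (a - j) → b a - b (a - j + 1) < c → A c = a - j)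
    (D : ℤ → ℕ)
    (hD : ∀ (m : ℤ) (t : ℕ), 1 ≤ t → t ≤ k →
      (p (t - 1) : ℤ) < m → m ≤ (p t : ℤ) → D m = t - 1 ∧ D (-m) = a - t) :
    ∑ j ∈ Finset.Icc 1 a, ∑ l ∈ Finset.Icc 1 (r - 2 * f),
        lam j l * D (if j ≤ k then (p (j - 1) : ℤ) + (l : ℤ)
                     else -((p (2 * k - j + δ) : ℤ) - (l : ℤ) + 1))
      = ∑ c ∈ Finset.Icc 1 (r - 2 * f), A c := by
  obtain ⟨hdec, hvan, htot⟩ := hlam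
  set m₀ := r - 2 * f with hm0
  have hcase : (a = 2 * k ∧ δ = 1) ∨ (a = 2 * k - 1 ∧ δ = 0) := by
    rcases hii with h | h
    · exact Or.inl (ha.1 h)
    · exact Or.inr (ha.2 h)
  have hba : b a = m₀ := by rw [hb]; exact htot
  have hbstep : ∀ s, 1 ≤ s → b s = b (s - 1) + ∑ l ∈ Finset.Icc 1 m₀, lam s l := by
    intro s hs
    obtain ⟨s', rfl⟩ : ∃ s', s = s' + 1 := ⟨s - 1, by omega⟩
    rw [hb, hb, Finset.sum_Icc_succ_top (by omega)]
    simp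
  have hbsucc : ∀ s, b s ≤ b (s + 1) := by
    intro s
    have := hbstep (s + 1) (by omega)
    simp only [Nat.add_sub_cancel] at this
    omega
  have hbmono : Monotone b := monotone_nat_of_le_succ hbsucc
  have hble : ∀ s, s ≤ a → b s ≤ m₀ := fun s hs => hba ▸ hbmono hs
  -- LHS
  have hLHS : ∑ j ∈ Finset.Icc 1 a, ∑ l ∈ Finset.Icc 1 m₀,
        lam j l * D (if j ≤ k then (p (j - 1) : ℤ) + (l : ℤ)
            else -((p (2 * k - j + δ) : ℤ) - (l : ℤ) + 1))
      = ∑ j ∈ Finset.Icc 1 a, (j - 1) * (b j - b (j - 1)) := by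
    apply Finset.sum_congr rfl
    intro j hj
    simp only [Finset.mem_Icc] at hj
    have hstep := hbstep j hj.1
    have hjterm : ∀ l ∈ Finset.Icc 1 m₀,
        lam j l * D (if j ≤ k then (p (j - 1) : ℤ) + (l : ℤ)
            else -((p (2 * k - j + δ) : ℤ) - (l : ℤ) + 1)) = lam j l * (j - 1) := by
      intro l hl
      simp only [Finset.mem_Icc] at hl
      have hlr : l ≤ r := by omega
      by_cases hjk : j ≤ k
      · rw [if_pos hjk]
        have hg := hgap j hj.1 hjk
        have h1 : (p (j - 1) : ℤ) < (p (j - 1) : ℤ) + (l : ℤ) := by omega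
        have h2 : (p (j - 1) : ℤ) + (l : ℤ) ≤ (p j : ℤ) := by omega
        rw [(hD _ j hj.1 hjk h1 h2).1]
      · rw [if_neg hjk]
        set t' := 2 * k - j + δ with ht'
        have ht1 : 1 ≤ t' ∧ t' ≤ k ∧ a - t' = j - 1 := by omega
        have hg := hgap t' ht1.1 ht1.2.1
        have h1 : (p (t' - 1) : ℤ) < (p t' : ℤ) - (l : ℤ) + 1 := by omega
        have h2 : (p t' : ℤ) - (l : ℤ) + 1 ≤ (p t' : ℤ) := by omega
        rw [(hD ((p t' : ℤ) - (l : ℤ) + 1) t' ht1.1 ht1.2.1 h1 h2).2, ht1.2.2]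
    rw [Finset.sum_congr rfl hjterm, ← Finset.sum_mul]
    have : ∑ l ∈ Finset.Icc 1 m₀, lam j l = b j - b (j - 1) := by omega
    rw [this, Nat.mul_comm]
  rw [hLHS]
  -- RHS
  have hesucc : ∀ s, m₀ - b (s + 1) ≤ m₀ - b s := fun s => by have := hbsucc s; omega
  have htel := telescope_Ioc (fun s => m₀ - b s) A a hesucc
  have he0 : m₀ - b 0 = m₀ := by
    have : b 0 = 0 := by rw [hb]; simp
    omega
  have hea : m₀ - b a = 0 := by omega
  simp only [he0, hea] at htel
  rw [← Finset.Icc_add_one_left_eq_Ioc] at htel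
  rw [show (0 : ℕ) + 1 = 1 from rfl] at htel
  rw [← htel]
  apply Finset.sum_congr rfl
  intro s hs
  simp only [Finset.mem_Icc] at hs
  have hAval : ∀ c ∈ Finset.Ioc (m₀ - b s) (m₀ - b (s - 1)), A c = s - 1 := by
    intro c hc
    simp only [Finset.mem_Ioc] at hc
    have hbs := hble s hs.2
    have hbs1 := hble (s - 1) (by omega)
    have hbm := hbmono (show s - 1 ≤ s by omega)
    have hc1 : 1 ≤ c := by omega
    have hc2 : c ≤ m₀ := by omega
    have hj1 : a - (a - s + 1) = s - 1 := by omega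
    have hj2 : a - (a - s + 1) + 1 = s := by omega
    have := hA c hc1 hc2 (a - s + 1) (by omega) (by omega)
      (by rw [hj1, hba]; omega) (by rw [hj2, hba]; omega)
    rw [this]; omega
  rw [Finset.sum_congr rfl hAval, Finset.sum_const, Nat.card_Ioc, smul_eq_mul]
  have hbs := hble s hs.2
  have hbm := hbmono (show s - 1 ≤ s by omega)
  have hcard : m₀ - b (s - 1) - (m₀ - b s) = b s - b (s - 1) := by omega
  rw [hcard, Nat.mul_comm]
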